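/- arXiv:2110.14858 — 2 statements merged into one kernel-verified Lean document; each statement's English description precedes it below -/
import Mathlib

section
/- Let Σ = {a < b < c} and w ∈ Σ*, and let mi(w) denote the reverse of w. Then |mi(w)|_{abc} = |w|_a·|w|_b·|w|_c − |w|_a·|w|_{bc} − |w|_{ab}·|w|_c + |w|_{abc}. -/
/-- The number of occurrences of `v` as a scattered subword (subsequence) of `w`:
the number of strictly increasing sequences of positions in `w` spelling out `v`. -/
def subwordCount {α : Type*} [DecidableEq α] (w v : List α) : ℕ :=
  w.sublists.count v

/-- The conjugacy class (circular word) `[w]` of `w`: the set of all cyclic shifts of `w`. -/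
def conjClass {α : Type*} [DecidableEq α] (w : List α) : Finset (List α) :=
  insert w ((Finset.range w.length).image w.rotate)

/-- The average subword count of `v` in the circular word `[w]`:
`|[w]|_v = (1/|[w]|) ∑_{u ∈ [w]} |u|_v`. -/
def circCount {α : Type*} [DecidableEq α] (w v : List α) : ℚ :=
  (∑ u ∈ conjClass w, (subwordCount u v : ℚ)) / ((conjClass w).card : ℚ)

/-- The Parikh matrix of the letter `q` of the ordered alphabet `Fin s`:
the identity matrix with an extra `1` in entry `(q, q+1)`. -/
def parikhLetter {s : ℕ} (q : Fin s) : Matrix (Fin (s + 1)) (Fin (s + 1)) ℚ :=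
  1 + Matrix.single q.castSucc q.succ 1

/-- The Parikh matrix mapping over the ordered alphabet `Fin s` (a monoid morphism). -/
def parikhMatrix {s : ℕ} (w : List (Fin s)) : Matrix (Fin (s + 1)) (Fin (s + 1)) ℚ :=
  (w.map parikhLetter).prod

/-- The Parikh matrix of the circular word `[w]`:
`Ψ([w]) = (1/|[w]|) ∑_{u ∈ [w]} Ψ(u)`. -/
def circParikh {s : ℕ} (w : List (Fin s)) : Matrix (Fin (s + 1)) (Fin (s + 1)) ℚ :=
  (((conjClass w).card : ℚ))⁻¹ • ∑ u ∈ conjClass w, parikhMatrix u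

/-- The alternate matrix: `(i,j)` entry is `(-1)^(i+j)` times the `(i,j)` entry of `A`. -/
def altMatrix {n : ℕ} (A : Matrix (Fin n) (Fin n) ℚ) : Matrix (Fin n) (Fin n) ℚ :=
  Matrix.of fun i j => (-1 : ℚ) ^ (i.val + j.val) * A i j

/-- The word `a_i a_{i+1} ⋯ a_j` over the ordered alphabet `Fin s`. -/
def segWord {s : ℕ} (i j : Fin s) : List (Fin s) :=
  (List.range (j.val - i.val + 1)).attach.map fun t =>
    ⟨i.val + t.1, by
      have ht := List.mem_range.mp t.2
      have hi := i.isLt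
      have hj := j.isLt
      omega⟩

section SubwordCount

variable {α : Type*} [DecidableEq α]

theorem subwordCount_eq_count_sublists' (w v : List α) :
    subwordCount w v = w.sublists'.count v :=
  (List.sublists_perm_sublists' w).count_eq v

@[simp]
theorem subwordCount_nil_right (w : List α) : subwordCount w [] = 1 := by
  induction w with
  | nil => rfl
  | cons x w ih =>
    rw [subwordCount_eq_count_sublists'] at ih ⊢
    rw [List.sublists'_cons, List.count_append, ih, List.count_eq_zero.2 (by simp)]

@[simp]
theorem subwordCount_nil_cons (y : α) (v : List α) : subwordCount [] (y :: v) = 0 := by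
  simp [subwordCount]

theorem subwordCount_cons_cons (x : α) (w : List α) (y : α) (v : List α) :
    subwordCount (x :: w) (y :: v) =
      subwordCount w (y :: v) + if x = y then subwordCount w v else 0 := by
  simp only [subwordCount_eq_count_sublists', List.sublists'_cons, List.count_append]
  congr 1
  split_ifs with h
  · subst h
    exact List.count_map_of_injective _ _ List.cons_injective _
  · exact List.count_eq_zero.2 fun hm => by
      obtain ⟨u, -, hu⟩ := List.mem_map.1 hm
      exact h (List.cons_eq_cons.1 hu).1

theorem subwordCount_reverse (w v : List α) :
    subwordCount w.reverse v = subwordCount w v.reverse := by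
  rw [subwordCount_eq_count_sublists', List.sublists'_reverse, ← List.reverse_reverse v,
    List.count_map_of_injective _ _ List.reverse_injective, List.reverse_reverse, subwordCount]

variable {a b c : α}

theorem subwordCount_pair_add_swap (hab : a ≠ b) (w : List α) :
    subwordCount w [a, b] + subwordCount w [b, a] = subwordCount w [a] * subwordCount w [b] := by
  induction w with
  | nil => simp
  | cons x w ih =>
    simp only [subwordCount_cons_cons, subwordCount_nil_right]
    split_ifs <;> subst_vars <;> first | contradiction | linear_combination ih

theorem subwordCount_reverse_triple (hab : a ≠ b) (hac : a ≠ c) (hbc : b ≠ c) (w : List α) :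
    (subwordCount w [c, b, a] : ℤ) =
      subwordCount w [a] * subwordCount w [b] * subwordCount w [c]
        - subwordCount w [a] * subwordCount w [b, c]
        - subwordCount w [a, b] * subwordCount w [c]
        + subwordCount w [a, b, c] := by
  induction w with
  | nil => simp
  | cons x w ih =>
    have hba : (subwordCount w [a, b] + subwordCount w [b, a] : ℤ) =
        subwordCount w [a] * subwordCount w [b] := mod_cast subwordCount_pair_add_swap hab w
    simp only [subwordCount_cons_cons, subwordCount_nil_right]
    -- Only prepending `c` needs the pair identity: it adds `|w|_{ba} = |w|_a |w|_b - |w|_{ab}`.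
    split_ifs <;> subst_vars <;> push_cast <;> first
      | contradiction | linear_combination ih | linear_combination ih + hba

end SubwordCount

/-- Remark 20: for a word `w` over `{a < b < c} = Fin 3` (with `a = 0`, `b = 1`, `c = 2`),
`|mi(w)|_{abc} = |w|_a|w|_b|w|_c − |w|_a|w|_{bc} − |w|_{ab}|w|_c + |w|_{abc}`. -/
theorem stmt_7 (w : List (Fin 3)) :
    (subwordCount w.reverse [0, 1, 2] : ℤ) =
      (subwordCount w [0] : ℤ) * (subwordCount w [1] : ℤ) * (subwordCount w [2] : ℤ)
        - (subwordCount w [0] : ℤ) * (subwordCount w [1, 2] : ℤ)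
        - (subwordCount w [0, 1] : ℤ) * (subwordCount w [2] : ℤ)
        + (subwordCount w [0, 1, 2] : ℤ) := by
  rw [subwordCount_reverse]
  exact subwordCount_reverse_triple (by decide) (by decide) (by decide) w
end

section
/- Let Σ = {a < b < c} be the ternary ordered alphabet and w ∈ Σ*. Then the inverse of the Parikh matrix of the circular word [w] equals the alternate Parikh matrix of the circular word [mi(w)]: [Ψ_Σ([w])]^{−1} = \overline{Ψ}_Σ([mi(w)]). -/
/-! Over any alphabet `Ψ(u) · \overline{Ψ}(mi(u)) = 1`: conjugation by `diag((-1)^i)` makes the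
alternate matrix multiplicative, and on a letter the identity reads `(1 + E)(1 - E) = 1`. So it
suffices to show `∑_{u,v ∈ [w]} Ψ(u) Ψ(v)⁻¹ = |[w]|² · 1`. Conjugate words have the same Parikh
vector, hence `Ψ(u) - Ψ(v)` and `Ψ(v)⁻¹ - Ψ(w)⁻¹` vanish on and just above the diagonal; for a
ternary alphabet these are `4 × 4` matrices, so their product is zero. Thus
`Ψ(u) Ψ(v)⁻¹ = 1 + (Ψ(u) - Ψ(v)) Ψ(w)⁻¹`, and the second term cancels in the double sum. -/

open Matrix

section AltMatrix

variable {n : ℕ}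

def signDiagonal (n : ℕ) : Matrix (Fin n) (Fin n) ℚ :=
  diagonal fun i => (-1) ^ (i : ℕ)

lemma signDiagonal_mul_self : signDiagonal n * signDiagonal n = 1 := by
  simp [signDiagonal, diagonal_mul_diagonal, ← mul_pow]

lemma altMatrix_eq_signDiagonal_mul_mul (A : Matrix (Fin n) (Fin n) ℚ) :
    altMatrix A = signDiagonal n * A * signDiagonal n := by
  ext i j
  simp only [altMatrix, pow_add, of_apply, signDiagonal, mul_diagonal, diagonal_mul]
  ring

lemma altMatrix_mul (A B : Matrix (Fin n) (Fin n) ℚ) :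
    altMatrix (A * B) = altMatrix A * altMatrix B := by
  simp only [altMatrix_eq_signDiagonal_mul_mul, Matrix.mul_assoc]
  rw [← Matrix.mul_assoc (signDiagonal n) (signDiagonal n), signDiagonal_mul_self,
    Matrix.one_mul]

lemma altMatrix_one : altMatrix (1 : Matrix (Fin n) (Fin n) ℚ) = 1 := by
  rw [altMatrix_eq_signDiagonal_mul_mul, Matrix.mul_one, signDiagonal_mul_self]

lemma altMatrix_add (A B : Matrix (Fin n) (Fin n) ℚ) :
    altMatrix (A + B) = altMatrix A + altMatrix B := by
  simp only [altMatrix_eq_signDiagonal_mul_mul, Matrix.mul_add, Matrix.add_mul]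

lemma altMatrix_sub (A B : Matrix (Fin n) (Fin n) ℚ) :
    altMatrix (A - B) = altMatrix A - altMatrix B := by
  simp only [altMatrix_eq_signDiagonal_mul_mul, Matrix.mul_sub, Matrix.sub_mul]

lemma altMatrix_smul (c : ℚ) (A : Matrix (Fin n) (Fin n) ℚ) :
    altMatrix (c • A) = c • altMatrix A := by
  simp only [altMatrix_eq_signDiagonal_mul_mul, Matrix.mul_smul, Matrix.smul_mul]

lemma altMatrix_sum {ι : Type*} (S : Finset ι) (f : ι → Matrix (Fin n) (Fin n) ℚ) :
    altMatrix (∑ u ∈ S, f u) = ∑ u ∈ S, altMatrix (f u) := by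
  simp only [altMatrix_eq_signDiagonal_mul_mul, Matrix.mul_sum, Matrix.sum_mul]

lemma altMatrix_single (i j : Fin n) (c : ℚ) :
    altMatrix (single i j c) = (-1 : ℚ) ^ ((i : ℕ) + j) • single i j c := by
  ext k l
  by_cases h : i = k ∧ j = l
  · obtain ⟨rfl, rfl⟩ := h
    simp [altMatrix]
  · simp [altMatrix, single_apply, h]

end AltMatrix

section ParikhMatrix

variable {s : ℕ}

lemma parikhMatrix_nil : parikhMatrix ([] : List (Fin s)) = 1 := rfl

lemma parikhMatrix_cons (q : Fin s) (u : List (Fin s)) :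
    parikhMatrix (q :: u) = parikhLetter q * parikhMatrix u := by
  simp [parikhMatrix]

lemma parikhMatrix_append (u v : List (Fin s)) :
    parikhMatrix (u ++ v) = parikhMatrix u * parikhMatrix v := by
  simp [parikhMatrix]

lemma parikhMatrix_singleton (q : Fin s) : parikhMatrix [q] = parikhLetter q := by
  simp [parikhMatrix]

lemma parikhLetter_mul_altMatrix_parikhLetter (q : Fin s) :
    parikhLetter q * altMatrix (parikhLetter q) = 1 := by
  have hsq : single q.castSucc q.succ (1 : ℚ) * single q.castSucc q.succ 1 = 0 :=
    single_mul_single_of_ne _ _ _ _ (Fin.castSucc_lt_succ (i := q)).ne' _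
  have hodd : (-1 : ℚ) ^ ((q.castSucc : ℕ) + q.succ) = -1 := by
    simp [Odd.neg_one_pow, ← add_assoc]
  rw [parikhLetter, altMatrix_add, altMatrix_one, altMatrix_single, hodd, neg_one_smul]
  simp [Matrix.add_mul, Matrix.mul_add, hsq]

lemma parikhMatrix_mul_altMatrix_reverse (u : List (Fin s)) :
    parikhMatrix u * altMatrix (parikhMatrix u.reverse) = 1 := by
  induction u with
  | nil => simp [parikhMatrix_nil, altMatrix_one]
  | cons q t ih =>
    rw [List.reverse_cons, parikhMatrix_append, parikhMatrix_singleton, altMatrix_mul,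
      parikhMatrix_cons, Matrix.mul_assoc, ← Matrix.mul_assoc (parikhMatrix t), ih,
      Matrix.one_mul, parikhLetter_mul_altMatrix_parikhLetter]

lemma parikhMatrix_cons_apply (q : Fin s) (u : List (Fin s)) (i j : Fin (s + 1)) :
    parikhMatrix (q :: u) i j =
      parikhMatrix u i j + if i = q.castSucc then parikhMatrix u q.succ j else 0 := by
  rw [parikhMatrix_cons, parikhLetter, Matrix.add_mul, Matrix.one_mul, Matrix.add_apply]
  split_ifs with h
  · rw [h, single_mul_apply_same, one_mul]
  · rw [single_mul_apply_of_ne _ _ _ _ _ h]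

lemma parikhMatrix_apply_of_lt (u : List (Fin s)) {i j : Fin (s + 1)} (h : j < i) :
    parikhMatrix u i j = 0 := by
  induction u generalizing i with
  | nil => exact one_apply_ne' h.ne
  | cons q t ih =>
    rw [parikhMatrix_cons_apply, ih h, zero_add]
    split_ifs with hi
    · exact ih (h.trans (hi ▸ Fin.castSucc_lt_succ))
    · rfl

lemma parikhMatrix_apply_self (u : List (Fin s)) (i : Fin (s + 1)) : parikhMatrix u i i = 1 := by
  induction u with
  | nil => exact one_apply_eq i
  | cons q t ih =>
    rw [parikhMatrix_cons_apply, ih]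
    split_ifs with hi
    · rw [parikhMatrix_apply_of_lt t (hi ▸ Fin.castSucc_lt_succ), add_zero]
    · exact add_zero 1

lemma parikhMatrix_apply_castSucc_succ (u : List (Fin s)) (q : Fin s) :
    parikhMatrix u q.castSucc q.succ = u.count q := by
  induction u with
  | nil => exact one_apply_ne' (Fin.castSucc_lt_succ (i := q)).ne'
  | cons r t ih =>
    rw [parikhMatrix_cons_apply, ih, List.count_cons]
    by_cases hqr : q = r
    · simp [hqr, parikhMatrix_apply_self]
    · simp [hqr, Ne.symm hqr, Fin.castSucc_inj]

end ParikhMatrix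

section VanishesThroughSuperdiag

def VanishesThroughSuperdiag {α : Type*} [Zero α] {n : ℕ} (M : Matrix (Fin n) (Fin n) α) :
    Prop :=
  ∀ i j : Fin n, (j : ℕ) ≤ i + 1 → M i j = 0

lemma VanishesThroughSuperdiag.mul_eq_zero {R : Type*} [NonUnitalNonAssocSemiring R] {n : ℕ}
    (hn : n ≤ 4) {A B : Matrix (Fin n) (Fin n) R} (hA : VanishesThroughSuperdiag A)
    (hB : VanishesThroughSuperdiag B) : A * B = 0 := by
  ext i j
  rw [mul_apply, Matrix.zero_apply]
  refine Finset.sum_eq_zero fun k _ => ?_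
  by_cases hk : (k : ℕ) ≤ i + 1
  · rw [hA i k hk, zero_mul]
  · rw [hB k j (by omega), mul_zero]

lemma VanishesThroughSuperdiag.altMatrix {n : ℕ} {M : Matrix (Fin n) (Fin n) ℚ}
    (hM : VanishesThroughSuperdiag M) : VanishesThroughSuperdiag (altMatrix M) := by
  intro i j hij
  simp [_root_.altMatrix, hM i j hij]

lemma vanishesThroughSuperdiag_parikhMatrix_sub {s : ℕ} {u v : List (Fin s)} (h : u.Perm v) :
    VanishesThroughSuperdiag (parikhMatrix u - parikhMatrix v) := by
  intro i j hij
  rw [Matrix.sub_apply, sub_eq_zero]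
  obtain hji | rfl | hj := lt_trichotomy j i
  · rw [parikhMatrix_apply_of_lt u hji, parikhMatrix_apply_of_lt v hji]
  · rw [parikhMatrix_apply_self, parikhMatrix_apply_self]
  · obtain ⟨q, rfl, rfl⟩ : ∃ q : Fin s, q.castSucc = i ∧ q.succ = j :=
      ⟨⟨i, by omega⟩, rfl, Fin.ext (by simp; omega)⟩
    rw [parikhMatrix_apply_castSucc_succ, parikhMatrix_apply_castSucc_succ, h.count_eq]

end VanishesThroughSuperdiag

lemma parikhMatrix_mul_altMatrix_reverse_of_perm {u v w : List (Fin 3)} (huv : u.Perm v)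
    (hvw : v.Perm w) :
    parikhMatrix u * altMatrix (parikhMatrix v.reverse) =
      1 + (parikhMatrix u - parikhMatrix v) * altMatrix (parikhMatrix w.reverse) := by
  have hrev : v.reverse.Perm w.reverse :=
    (List.reverse_perm v).trans (hvw.trans (List.reverse_perm w).symm)
  have hsmall : (parikhMatrix u - parikhMatrix v) *
      (altMatrix (parikhMatrix v.reverse) - altMatrix (parikhMatrix w.reverse)) = 0 := by
    rw [← altMatrix_sub]
    exact (vanishesThroughSuperdiag_parikhMatrix_sub huv).mul_eq_zero le_rfl
      (vanishesThroughSuperdiag_parikhMatrix_sub hrev).altMatrix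
  calc parikhMatrix u * altMatrix (parikhMatrix v.reverse)
      = parikhMatrix v * altMatrix (parikhMatrix v.reverse) +
          (parikhMatrix u - parikhMatrix v) * altMatrix (parikhMatrix w.reverse) +
          (parikhMatrix u - parikhMatrix v) *
            (altMatrix (parikhMatrix v.reverse) - altMatrix (parikhMatrix w.reverse)) := by
        noncomm_ring
    _ = _ := by rw [parikhMatrix_mul_altMatrix_reverse, hsmall, add_zero]

section ConjClass

variable {α : Type*} [DecidableEq α]

lemma mem_conjClass {w u : List α} : u ∈ conjClass w ↔ w ~r u := by
  rw [List.isRotated_iff_mod]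
  simp only [conjClass, Finset.mem_insert, Finset.mem_image, Finset.mem_range]
  constructor
  · rintro (rfl | ⟨k, hk, rfl⟩)
    · exact ⟨0, Nat.zero_le _, u.rotate_zero⟩
    · exact ⟨k, hk.le, rfl⟩
  · rintro ⟨k, hk, rfl⟩
    rcases hk.lt_or_eq with hk | rfl
    · exact Or.inr ⟨k, hk, rfl⟩
    · exact Or.inl w.rotate_length

lemma conjClass_reverse (w : List α) : conjClass w.reverse = (conjClass w).image List.reverse := by
  ext u
  rw [Finset.mem_image, mem_conjClass]
  constructor
  · intro h
    exact ⟨u.reverse, mem_conjClass.mpr (by simpa using h.reverse), u.reverse_reverse⟩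
  · rintro ⟨v, hv, rfl⟩
    exact (mem_conjClass.mp hv).reverse

end ConjClass

lemma circParikh_reverse {s : ℕ} (w : List (Fin s)) :
    circParikh w.reverse =
      ((conjClass w).card : ℚ)⁻¹ • ∑ u ∈ conjClass w, parikhMatrix u.reverse := by
  rw [circParikh, conjClass_reverse, Finset.card_image_of_injective _ List.reverse_injective,
    Finset.sum_image fun _ _ _ _ h => List.reverse_injective h]

lemma Finset.sum_sum_sub_eq_zero {ι M : Type*} [AddCommGroup M] (S : Finset ι) (f : ι → M) :
    ∑ u ∈ S, ∑ v ∈ S, (f u - f v) = 0 := by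
  simp [Finset.sum_sub_distrib, Finset.smul_sum]

/-- Proposition 21 (ternary case): for a word `w` over `{a < b < c} = Fin 3`, the inverse of
the Parikh matrix of the circular word `[w]` is the alternate Parikh matrix of `[mi(w)]`. -/
theorem stmt_8 (w : List (Fin 3)) :
    (circParikh w)⁻¹ = altMatrix (circParikh w.reverse) := by
  have hw : w ∈ conjClass w := mem_conjClass.mpr (List.IsRotated.refl w)
  have hperm : ∀ u ∈ conjClass w, u.Perm w := fun u hu => (mem_conjClass.mp hu).perm.symm
  have hpairs : ∑ u ∈ conjClass w, ∑ v ∈ conjClass w,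
      parikhMatrix u * altMatrix (parikhMatrix v.reverse) =
        ((conjClass w).card * (conjClass w).card : ℚ) • 1 := by
    rw [Finset.sum_congr rfl fun u hu => Finset.sum_congr rfl fun v hv =>
      parikhMatrix_mul_altMatrix_reverse_of_perm ((hperm u hu).trans (hperm v hv).symm)
        (hperm v hv)]
    simp only [Finset.sum_add_distrib, ← Finset.sum_mul, Finset.sum_sum_sub_eq_zero,
      Matrix.zero_mul, add_zero, Finset.sum_const, ← Nat.cast_smul_eq_nsmul ℚ, smul_smul]
  have hcard : ((conjClass w).card : ℚ) ≠ 0 :=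
    Nat.cast_ne_zero.mpr (Finset.card_ne_zero_of_mem hw)
  refine Matrix.inv_eq_right_inv ?_
  rw [circParikh, circParikh_reverse, altMatrix_smul, altMatrix_sum, smul_mul_smul_comm,
    Finset.sum_mul_sum, hpairs, smul_smul]
  field_simp
  exact one_smul ℚ 1
end
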